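/- arXiv:1112.4087 — 3 statements merged into one kernel-verified Lean document; each statement's English description precedes it below -/
import Mathlib

section
/- Let S₁,…,Sₙ be pairwise disjoint polyominoes in ℤ×ℤ, each of which is orthogonally convex. Then unidirectional translational orderings exist in both axis directions: there is a permutation σ of {1,…,n} such that for all k < l and every natural number s, S_{σ(k)} + (s,0) is disjoint from S_{σ(l)}, and there is a permutation τ of {1,…,n} such that for all k < l and every natural number s, S_{τ(k)} + (0,s) is disjoint from S_{τ(l)}. -/
/-!
Say that `S` lies left of `T` when some cell of `S` is strictly left of a cell of `T` in a
common row. For disjoint y-monotone polyominoes, on each common row one of them lies entirely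
to the left of the other, and the side cannot change from one common row to the next, because
each polyomino has a vertical edge between two consecutive rows it meets. Hence "left of" is
asymmetric. It has no cycles either: if `U` is the member of a cycle whose bottom row is
highest, its neighbours `P → U → Q` both reach that row, where `P`, `U`, `Q` appear from left
to right, so `P → Q` and the cycle shortens. Listing the polyominoes so that none lies left of
a later one, moving an earlier one to the right never meets a later one. The vertical
direction is the horizontal one for the transposed polyominoes.
-/

/-- Two cells of `ℤ × ℤ` are edge-adjacent iff they are at Euclidean distance 1. -/
def EdgeAdj (c d : ℤ × ℤ) : Prop := (c.1 - d.1).natAbs + (c.2 - d.2).natAbs = 1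

/-- A polyomino: a finite nonempty edge-connected set of cells. -/
def IsPolyomino (S : Finset (ℤ × ℤ)) : Prop :=
  S.Nonempty ∧ ∀ c ∈ S, ∀ d ∈ S,
    Relation.ReflTransGen (fun a b => a ∈ S ∧ b ∈ S ∧ EdgeAdj a b) c d

/-- `S` is y-monotone: every row of `S` is an interval of `ℤ`. -/
def YMonotone (S : Finset (ℤ × ℤ)) : Prop :=
  ∀ r a b c : ℤ, (a, r) ∈ S → (c, r) ∈ S → a ≤ b → b ≤ c → (b, r) ∈ S

/-- `S` is x-monotone: every column of `S` is an interval of `ℤ`. -/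
def XMonotone (S : Finset (ℤ × ℤ)) : Prop :=
  ∀ c a b d : ℤ, (c, a) ∈ S → (c, d) ∈ S → a ≤ b → b ≤ d → (c, b) ∈ S

/-- `S` is orthogonally convex: it is both x-monotone and y-monotone. -/
def OrthoConvex (S : Finset (ℤ × ℤ)) : Prop := XMonotone S ∧ YMonotone S

/-- The translate `S + (s, t)`. -/
def translateBy (S : Finset (ℤ × ℤ)) (s t : ℤ) : Finset (ℤ × ℤ) :=
  S.image fun c => (c.1 + s, c.2 + t)

open Finset Relation

section TopologicalSort

variable {α : Type*}

theorem Finset.Nonempty.exists_forall_not_rel_of_shortcut {β : Type*} [LinearOrder β]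
    {R : α → α → Prop} (f : α → β) (asymm : ∀ a b, R a b → ¬R b a)
    (shortcut : ∀ p t q, R p t → R t q → f p ≤ f t → f q ≤ f t → R p q)
    {A : Finset α} (hA : A.Nonempty) : ∃ i ∈ A, ∀ j ∈ A, ¬R i j := by
  classical
  induction A using Finset.induction_on_max_value f with
  | empty => exact absurd hA not_nonempty_empty
  | insert t A _ hmax ih =>
    have irrefl : ∀ a, ¬R a a := fun a h => asymm a a h h
    rcases A.eq_empty_or_nonempty with rfl | hA'
    · exact ⟨t, by simp, by simpa using irrefl t⟩
    obtain ⟨k, hkA, hk⟩ := ih hA'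
    by_cases hkt : R k t
    · refine ⟨t, mem_insert_self t A, fun q hq htq => ?_⟩
      rcases mem_insert.mp hq with rfl | hqA
      · exact irrefl q htq
      · exact hk q hqA (shortcut k t q hkt htq (hmax k hkA) (hmax q hqA))
    · refine ⟨k, mem_insert_of_mem hkA, fun q hq => ?_⟩
      rcases mem_insert.mp hq with rfl | hqA
      exacts [hkt, hk q hqA]

theorem exists_list_pairwise_not_rel {R : α → α → Prop}
    (hsink : ∀ A : Finset α, A.Nonempty → ∃ i ∈ A, ∀ j ∈ A, ¬R i j) (A : Finset α) :
    ∃ L : List α, L.Nodup ∧ (∀ x, x ∈ L ↔ x ∈ A) ∧ L.Pairwise fun a b => ¬R a b := by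
  classical
  induction A using Finset.strongInduction with
  | _ A ih =>
    rcases A.eq_empty_or_nonempty with rfl | hA
    · exact ⟨[], List.nodup_nil, by simp, List.Pairwise.nil⟩
    obtain ⟨i, hiA, hi⟩ := hsink A hA
    obtain ⟨L, hnd, hmem, hL⟩ := ih (A.erase i) (erase_ssubset hiA)
    have hiL : i ∉ L := fun h => by simpa using (hmem i).mp h
    refine ⟨i :: L, List.nodup_cons.mpr ⟨hiL, hnd⟩, fun x => ?_,
      List.pairwise_cons.mpr ⟨fun j hj => hi j (mem_of_mem_erase ((hmem j).mp hj)), hL⟩⟩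
    rw [List.mem_cons, hmem, mem_erase]
    by_cases hx : x = i <;> simp [hx, hiA]

theorem exists_equiv_fin_forall_lt_not_rel [Fintype α] {R : α → α → Prop}
    (hsink : ∀ A : Finset α, A.Nonempty → ∃ i ∈ A, ∀ j ∈ A, ¬R i j) :
    ∃ e : Fin (Fintype.card α) ≃ α, ∀ k l, k < l → ¬R (e k) (e l) := by
  classical
  obtain ⟨L, hnd, hmem, hL⟩ := exists_list_pairwise_not_rel hsink univ
  let e := hnd.getEquivOfForallMemList L fun x => (hmem x).mpr (mem_univ x)
  have hlen : Fintype.card α = L.length := by simpa using (Fintype.card_congr e).symm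
  exact ⟨(finCongr hlen).trans e, fun k l hkl => List.pairwise_iff_get.mp hL _ _ hkl⟩

end TopologicalSort

def rows (S : Finset (ℤ × ℤ)) : Finset ℤ := S.image Prod.snd

@[simp]
theorem mem_rows {S : Finset (ℤ × ℤ)} {r : ℤ} : r ∈ rows S ↔ ∃ a, (a, r) ∈ S := by
  simp [rows]

theorem exists_vertical_adj_of_reflTransGen {S : Finset (ℤ × ℤ)} {c d : ℤ × ℤ} {t : ℤ}
    (h : ReflTransGen (fun a b => a ∈ S ∧ b ∈ S ∧ EdgeAdj a b) c d) (hc : c.2 ≤ t)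
    (hd : t < d.2) : ∃ a, (a, t) ∈ S ∧ (a, t + 1) ∈ S := by
  induction h with
  | refl => omega
  | @tail b d _ hbd ih =>
    by_cases hb : t < b.2
    · exact ih hb
    obtain ⟨hbS, hdS, hadj⟩ := hbd
    unfold EdgeAdj at hadj
    obtain ⟨hb2, hd2, hcol⟩ : b.2 = t ∧ d.2 = t + 1 ∧ d.1 = b.1 := by omega
    exact ⟨b.1, hb2 ▸ hbS, hcol ▸ hd2 ▸ hdS⟩

namespace IsPolyomino

variable {S : Finset (ℤ × ℤ)}

theorem rows_nonempty (hS : IsPolyomino S) : (rows S).Nonempty := hS.1.image _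

theorem exists_vertical_adj_of_mem_rows (hS : IsPolyomino S) {t : ℤ} (ht : t ∈ rows S)
    (ht' : t + 1 ∈ rows S) : ∃ c, (c, t) ∈ S ∧ (c, t + 1) ∈ S := by
  obtain ⟨a, ha⟩ := mem_rows.mp ht
  obtain ⟨b, hb⟩ := mem_rows.mp ht'
  exact exists_vertical_adj_of_reflTransGen (hS.2 _ ha _ hb) le_rfl (lt_add_one t)

theorem ordConnected_rows (hS : IsPolyomino S) : (rows S : Set ℤ).OrdConnected := by
  refine ⟨fun r hr r' hr' t ⟨hrt, htr'⟩ => ?_⟩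
  obtain ⟨a, ha⟩ := mem_rows.mp hr
  obtain ⟨b, hb⟩ := mem_rows.mp hr'
  rcases htr'.lt_or_eq with htr' | rfl
  · obtain ⟨c, hc, -⟩ := exists_vertical_adj_of_reflTransGen (hS.2 _ ha _ hb) hrt htr'
    exact mem_rows.mpr ⟨c, hc⟩
  · exact hr'

theorem mem_rows_of_min_le (hS : IsPolyomino S) {r r' : ℤ} (hr' : r' ∈ rows S)
    (hle : r ≤ r') (hmin : (rows S).min ≤ r) : r ∈ rows S := by
  obtain ⟨m, hm⟩ := Finset.min_of_nonempty hS.rows_nonempty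
  rw [hm, WithTop.coe_le_coe] at hmin
  exact hS.ordConnected_rows.out (mem_of_min hm) hr' ⟨hmin, hle⟩

end IsPolyomino

def RowLeft (S T : Finset (ℤ × ℤ)) (r : ℤ) : Prop :=
  ∀ a b, (a, r) ∈ S → (b, r) ∈ T → a < b

def LeftOf (S T : Finset (ℤ × ℤ)) : Prop :=
  ∃ r a b, (a, r) ∈ S ∧ (b, r) ∈ T ∧ a < b

section RowOrder

variable {S T : Finset (ℤ × ℤ)}

theorem rowLeft_or_rowLeft (hS : YMonotone S) (hT : YMonotone T) (hST : Disjoint S T)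
    (r : ℤ) : RowLeft S T r ∨ RowLeft T S r := by
  refine or_iff_not_imp_left.mpr fun h b₀ a₀ hb₀ ha₀ => not_le.mp fun hab₀ => ?_
  obtain ⟨a₁, b₁, ha₁, hb₁, hba₁⟩ : ∃ a₁ b₁, (a₁, r) ∈ S ∧ (b₁, r) ∈ T ∧ b₁ ≤ a₁ := by
    simpa [RowLeft] using h
  rcases le_or_gt b₀ a₁ with h₀ | h₀
  · exact disjoint_left.mp hST (hS r a₀ b₀ a₁ ha₀ ha₁ hab₀ h₀) hb₀
  · exact disjoint_left.mp hST ha₁ (hT r b₁ a₁ b₀ hb₁ hb₀ hba₁ h₀.le)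

theorem RowLeft.of_common_columns (hS : YMonotone S) (hT : YMonotone T) (hST : Disjoint S T)
    {a b r r' : ℤ} (ha : (a, r) ∈ S) (ha' : (a, r') ∈ S) (hb : (b, r) ∈ T) (hb' : (b, r') ∈ T)
    (h : RowLeft S T r) : RowLeft S T r' :=
  (rowLeft_or_rowLeft hS hT hST r').resolve_right
    fun h' => lt_asymm (h a b ha hb) (h' b a hb' ha')

theorem rowLeft_iff_rowLeft (hpS : IsPolyomino S) (hpT : IsPolyomino T) (hS : YMonotone S)
    (hT : YMonotone T) (hST : Disjoint S T) {r r' : ℤ} (hrS : r ∈ rows S) (hrT : r ∈ rows T)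
    (hr'S : r' ∈ rows S) (hr'T : r' ∈ rows T) : RowLeft S T r ↔ RowLeft S T r' := by
  wlog hle : r ≤ r'
  · exact (this hpS hpT hS hT hST hr'S hr'T hrS hrT (le_of_not_ge hle)).symm
  induction r', hle using Int.leInduction with
  | base => rfl
  | succ t hrt ih =>
    have htS := hpS.ordConnected_rows.out hrS hr'S ⟨hrt, (lt_add_one t).le⟩
    have htT := hpT.ordConnected_rows.out hrT hr'T ⟨hrt, (lt_add_one t).le⟩
    obtain ⟨a, ha, ha'⟩ := hpS.exists_vertical_adj_of_mem_rows htS hr'S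
    obtain ⟨b, hb, hb'⟩ := hpT.exists_vertical_adj_of_mem_rows htT hr'T
    rw [ih htS htT]
    exact ⟨RowLeft.of_common_columns hS hT hST ha ha' hb hb',
      RowLeft.of_common_columns hS hT hST ha' ha hb' hb⟩

theorem LeftOf.exists_mem_rows (h : LeftOf S T) : ∃ r ∈ rows S, r ∈ rows T := by
  obtain ⟨r, a, b, ha, hb, -⟩ := h
  exact ⟨r, mem_rows.mpr ⟨a, ha⟩, mem_rows.mpr ⟨b, hb⟩⟩

theorem LeftOf.rowLeft (hpS : IsPolyomino S) (hpT : IsPolyomino T) (hS : YMonotone S)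
    (hT : YMonotone T) (hST : Disjoint S T) (h : LeftOf S T) {r : ℤ} (hrS : r ∈ rows S)
    (hrT : r ∈ rows T) : RowLeft S T r := by
  obtain ⟨r₀, a, b, ha, hb, hab⟩ := h
  have hr₀ : RowLeft S T r₀ := (rowLeft_or_rowLeft hS hT hST r₀).resolve_right
    fun h' => lt_asymm hab (h' b a hb ha)
  exact (rowLeft_iff_rowLeft hpS hpT hS hT hST (mem_rows.mpr ⟨a, ha⟩) (mem_rows.mpr ⟨b, hb⟩)
    hrS hrT).mp hr₀

theorem LeftOf.not_leftOf (hpS : IsPolyomino S) (hpT : IsPolyomino T) (hS : YMonotone S)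
    (hT : YMonotone T) (hST : Disjoint S T) (h : LeftOf S T) : ¬LeftOf T S := by
  rintro ⟨r, b, a, hb, ha, hba⟩
  exact lt_asymm hba (h.rowLeft hpS hpT hS hT hST (mem_rows.mpr ⟨a, ha⟩)
    (mem_rows.mpr ⟨b, hb⟩) a b ha hb)

end RowOrder

theorem LeftOf.trans_of_min_rows_le {P U Q : Finset (ℤ × ℤ)} (hpP : IsPolyomino P)
    (hpU : IsPolyomino U) (hpQ : IsPolyomino Q) (hP : YMonotone P) (hU : YMonotone U)
    (hQ : YMonotone Q) (hPU : Disjoint P U) (hUQ : Disjoint U Q) (hPU' : LeftOf P U)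
    (hUQ' : LeftOf U Q) (hminP : (rows P).min ≤ (rows U).min)
    (hminQ : (rows Q).min ≤ (rows U).min) : LeftOf P Q := by
  obtain ⟨r, hr⟩ := Finset.min_of_nonempty hpU.rows_nonempty
  have hrU : r ∈ rows U := mem_of_min hr
  obtain ⟨r₁, hr₁P, hr₁U⟩ := hPU'.exists_mem_rows
  obtain ⟨r₂, hr₂U, hr₂Q⟩ := hUQ'.exists_mem_rows
  have hrP : r ∈ rows P := hpP.mem_rows_of_min_le hr₁P
    (WithTop.coe_le_coe.mp (hr ▸ min_le hr₁U)) (hr ▸ hminP)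
  have hrQ : r ∈ rows Q := hpQ.mem_rows_of_min_le hr₂Q
    (WithTop.coe_le_coe.mp (hr ▸ min_le hr₂U)) (hr ▸ hminQ)
  obtain ⟨x, hx⟩ := mem_rows.mp hrP
  obtain ⟨y, hy⟩ := mem_rows.mp hrU
  obtain ⟨z, hz⟩ := mem_rows.mp hrQ
  exact ⟨r, x, z, hx, hz, (hPU'.rowLeft hpP hpU hP hU hPU hrP hrU x y hx hy).trans
    (hUQ'.rowLeft hpU hpQ hU hQ hUQ hrU hrQ y z hy hz)⟩

theorem disjoint_translateBy_of_not_leftOf {S T : Finset (ℤ × ℤ)} (hST : Disjoint S T)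
    (h : ¬LeftOf S T) (s : ℕ) : Disjoint (translateBy S s 0) T := by
  rw [disjoint_left]
  rintro _ hc hcT
  obtain ⟨⟨a, r⟩, har, rfl⟩ := mem_image.mp hc
  rcases Nat.eq_zero_or_pos s with rfl | hs
  · exact disjoint_left.mp hST har (by simpa using hcT)
  · exact h ⟨r, a, a + s, har, by simpa using hcT, by omega⟩

def transpose (S : Finset (ℤ × ℤ)) : Finset (ℤ × ℤ) := S.map (Equiv.prodComm ℤ ℤ).toEmbedding

@[simp]
theorem mem_transpose {S : Finset (ℤ × ℤ)} {c : ℤ × ℤ} : c ∈ transpose S ↔ c.swap ∈ S := by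
  simp [transpose]

@[simp]
theorem disjoint_transpose {S T : Finset (ℤ × ℤ)} :
    Disjoint (transpose S) (transpose T) ↔ Disjoint S T :=
  disjoint_map _

theorem IsPolyomino.transpose {S : Finset (ℤ × ℤ)} (hS : IsPolyomino S) :
    IsPolyomino (transpose S) := by
  refine ⟨hS.1.map, fun c hc d hd => ?_⟩
  rw [← Prod.swap_swap c, ← Prod.swap_swap d]
  refine (hS.2 _ (mem_transpose.mp hc) _ (mem_transpose.mp hd)).lift Prod.swap
    fun x y ⟨hx, hy, hxy⟩ => ⟨by simpa, by simpa, ?_⟩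
  unfold EdgeAdj at hxy ⊢
  simpa [add_comm] using hxy

theorem XMonotone.transpose {S : Finset (ℤ × ℤ)} (hS : XMonotone S) :
    YMonotone (transpose S) := by
  intro r a b c ha hc hab hbc
  simpa using hS r a b c (by simpa using ha) (by simpa using hc) hab hbc

theorem transpose_translateBy (S : Finset (ℤ × ℤ)) (s t : ℤ) :
    transpose (translateBy S s t) = translateBy (transpose S) t s := by
  ext ⟨a, b⟩
  simp only [mem_transpose, translateBy, mem_image, Prod.swap_prod_mk, Prod.exists, Prod.mk.injEq]
  constructor <;> rintro ⟨x, y, h, rfl, rfl⟩ <;> exact ⟨y, x, h, rfl, rfl⟩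

theorem exists_perm_disjoint_translateBy_horizontal {n : ℕ} (S : Fin n → Finset (ℤ × ℤ))
    (hpoly : ∀ i, IsPolyomino (S i)) (hdisj : Pairwise fun i j => Disjoint (S i) (S j))
    (hmono : ∀ i, YMonotone (S i)) :
    ∃ σ : Equiv.Perm (Fin n), ∀ k l : Fin n, k < l → ∀ s : ℕ,
      Disjoint (translateBy (S (σ k)) s 0) (S (σ l)) := by
  let R : Fin n → Fin n → Prop := fun i j => i ≠ j ∧ LeftOf (S i) (S j)
  have asymm : ∀ i j, R i j → ¬R j i := fun i j ⟨hij, h⟩ ⟨_, h'⟩ =>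
    h.not_leftOf (hpoly i) (hpoly j) (hmono i) (hmono j) (hdisj hij) h'
  have shortcut : ∀ p t q, R p t → R t q → (rows (S p)).min ≤ (rows (S t)).min →
      (rows (S q)).min ≤ (rows (S t)).min → R p q := by
    rintro p t q ⟨hpt, h₁⟩ ⟨htq, h₂⟩ hp hq
    refine ⟨by rintro rfl; exact asymm p t ⟨hpt, h₁⟩ ⟨htq, h₂⟩, ?_⟩
    exact h₁.trans_of_min_rows_le (hpoly p) (hpoly t) (hpoly q) (hmono p) (hmono t) (hmono q)
      (hdisj hpt) (hdisj htq) h₂ hp hq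
  obtain ⟨e, he⟩ := exists_equiv_fin_forall_lt_not_rel fun A hA =>
    hA.exists_forall_not_rel_of_shortcut _ asymm shortcut
  refine ⟨(finCongr (Fintype.card_fin n).symm).trans e, fun k l hkl => ?_⟩
  have hkl' : Fin.cast (Fintype.card_fin n).symm k < Fin.cast (Fintype.card_fin n).symm l := hkl
  have hne := e.injective.ne hkl'.ne
  exact disjoint_translateBy_of_not_leftOf (hdisj hne) fun h => he _ _ hkl' ⟨hne, h⟩

/-- A system of pairwise disjoint orthogonally convex polyominoes admits unidirectional
translational orderings in both axis directions. -/
theorem orthoconvex_exists_UTO_both_directions (n : ℕ) (S : Fin n → Finset (ℤ × ℤ))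
    (hpoly : ∀ i, IsPolyomino (S i))
    (hdisj : Pairwise fun i j => Disjoint (S i) (S j))
    (hconv : ∀ i, OrthoConvex (S i)) :
    (∃ σ : Equiv.Perm (Fin n), ∀ k l : Fin n, k < l → ∀ s : ℕ,
      Disjoint (translateBy (S (σ k)) s 0) (S (σ l))) ∧
    (∃ τ : Equiv.Perm (Fin n), ∀ k l : Fin n, k < l → ∀ s : ℕ,
      Disjoint (translateBy (S (τ k)) 0 s) (S (τ l))) := by
  refine ⟨exists_perm_disjoint_translateBy_horizontal S hpoly hdisj fun i => (hconv i).2, ?_⟩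
  obtain ⟨τ, hτ⟩ := exists_perm_disjoint_translateBy_horizontal (fun i => transpose (S i))
    (fun i => (hpoly i).transpose) (fun i j hij => disjoint_transpose.mpr (hdisj hij))
    fun i => (hconv i).1.transpose
  refine ⟨τ, fun k l hkl s => ?_⟩
  have h := hτ k l hkl s
  rw [← transpose_translateBy] at h
  exact disjoint_transpose.mp h
end

section
/- Let P be a polyomino with at most 5 cells, and let U₁,…,U_k be pairwise disjoint cell sets, each disjoint from P and each a translate of either the upward-opening U-pentomino U₀ = {(0,0),(1,0),(2,0),(0,1),(2,1)} or its reflection across a horizontal axis (a downward-opening U), such that the pocket cell of each U_j belongs to P. Then k ≤ 2. -/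
/-- The upward-opening U-pentomino, with pocket cell `(1, 1)`. -/
def U0 : Finset (ℤ × ℤ) := {(0, 0), (1, 0), (2, 0), (0, 1), (2, 1)}

/-- The downward-opening U-pentomino (the reflection of `U0` across a horizontal axis),
with pocket cell `(1, -1)`. -/
def U0down : Finset (ℤ × ℤ) := U0.image fun c => (c.1, -c.2)

/-!
Each pocket cell `p` of an attached U has all its neighbours except the one straight out of the
mouth of the U inside that U, hence outside `P`; since `P` is connected and has more than one
cell, `p` is a leaf of `P` hanging from this vertical *stem*. A stem cannot itself be a pocket
(that pair would be all of `P`), so three pockets with three distinct stems would need six cells.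
If two pockets share a stem `s`, they sit directly above and below `s`, and `P` consists of them,
`s`, the third pocket `p` and its stem `t`. Connectivity forces `t` to be a horizontal neighbour
of `s`, but then `p` is a horizontal neighbour of one of the first two pockets, which is a cell
of its U.
-/

/-- `p ∈ P` is the pocket of `U`, whose mouth opens towards the stem `p + (0, e)`; only the cells of
`U` next to `p` are recorded. -/
structure IsAttachedPocket (P U : Finset (ℤ × ℤ)) (p : ℤ × ℤ) (e : ℤ) : Prop where
  sign : e = 1 ∨ e = -1
  mem : p ∈ P
  disjoint : Disjoint U P
  left_mem : p - (1, 0) ∈ U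
  right_mem : p + (1, 0) ∈ U
  floor_mem : p - (0, e) ∈ U

theorem IsPolyomino.subset_of_isClosed {P X : Finset (ℤ × ℤ)} (hP : IsPolyomino P)
    (hX : ∀ a ∈ X, ∀ b ∈ P, EdgeAdj a b → b ∈ X) {c : ℤ × ℤ} (hcP : c ∈ P) (hcX : c ∈ X) :
    P ⊆ X := by
  intro d hd
  have hcd := hP.2 c hcP d hd
  clear hd
  induction hcd with
  | refl => exact hcX
  | tail _ hab ih => exact hX _ ih _ hab.2.1 hab.2.2

section SharedStem

variable {a b c : ℤ × ℤ} {ea eb ec : ℤ}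

theorem eq_or_eq_of_shared_stem (hea : ea = 1 ∨ ea = -1) (heb : eb = 1 ∨ eb = -1)
    (hec : ec = 1 ∨ ec = -1) (hab : a + (0, ea) = b + (0, eb)) (hne : a ≠ b)
    (hc : c + (0, ec) = a + (0, ea)) : c = a ∨ c = b := by
  obtain ⟨a1, a2⟩ := a
  obtain ⟨b1, b2⟩ := b
  obtain ⟨c1, c2⟩ := c
  simp only [Prod.mk_add_mk, Prod.mk.injEq, ne_eq] at *
  omega

theorem eq_side_of_edgeAdj_shared_stem (hea : ea = 1 ∨ ea = -1) (heb : eb = 1 ∨ eb = -1)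
    (hec : ec = 1 ∨ ec = -1) (hab : a + (0, ea) = b + (0, eb)) (hne : a ≠ b)
    (hadj : EdgeAdj (c + (0, ec)) (a + (0, ea))) (hca : c + (0, ec) ≠ a)
    (hcb : c + (0, ec) ≠ b) :
    c = a - (1, 0) ∨ c = a + (1, 0) ∨ c = b - (1, 0) ∨ c = b + (1, 0) := by
  obtain ⟨a1, a2⟩ := a
  obtain ⟨b1, b2⟩ := b
  obtain ⟨c1, c2⟩ := c
  simp only [EdgeAdj, Prod.mk_add_mk, Prod.mk_sub_mk, Prod.mk.injEq, ne_eq] at *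
  rcases hea with rfl | rfl <;> rcases heb with rfl | rfl <;> rcases hec with rfl | rfl <;> omega

end SharedStem

theorem EdgeAdj.symm {c d : ℤ × ℤ} (h : EdgeAdj c d) : EdgeAdj d c := by
  unfold EdgeAdj at *
  omega

namespace IsAttachedPocket

variable {P U : Finset (ℤ × ℤ)} {p : ℤ × ℤ} {e : ℤ}

theorem of_image_add {W : Finset (ℤ × ℤ)} {q v : ℤ × ℤ} (he : e = 1 ∨ e = -1)
    (hW : q - (1, 0) ∈ W ∧ q + (1, 0) ∈ W ∧ q - (0, e) ∈ W) (hU : U = W.image (· + v))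
    (hd : Disjoint U P) (hq : q + v ∈ P) : IsAttachedPocket P U (q + v) e := by
  subst hU
  obtain ⟨hl, hr, hf⟩ := hW
  refine ⟨he, hq, hd, ?_, ?_, ?_⟩ <;>
    simp only [add_sub_right_comm, add_right_comm q v]
  exacts [Finset.mem_image_of_mem _ hl, Finset.mem_image_of_mem _ hr, Finset.mem_image_of_mem _ hf]

theorem exists_of_translate_U0 (hd : Disjoint U P)
    (h : ∃ v : ℤ × ℤ,
      (U = U0.image (fun c => c + v) ∧ ((1 : ℤ), (1 : ℤ)) + v ∈ P) ∨
      (U = U0down.image (fun c => c + v) ∧ ((1 : ℤ), (-1 : ℤ)) + v ∈ P)) :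
    ∃ p e, IsAttachedPocket P U p e := by
  obtain ⟨v, ⟨hU, hp⟩ | ⟨hU, hp⟩⟩ := h
  · exact ⟨_, _, of_image_add (.inl rfl) (by decide) hU hd hp⟩
  · exact ⟨_, _, of_image_add (.inr rfl) (by decide) hU hd hp⟩

theorem eq_stem_of_edgeAdj (h : IsAttachedPocket P U p e) {q : ℤ × ℤ} (hq : q ∈ P)
    (hpq : EdgeAdj p q) : q = p + (0, e) := by
  have hqU : q ∉ U := Finset.disjoint_right.mp h.disjoint hq
  have := h.sign
  have hl := h.left_mem
  have hr := h.right_mem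
  have hf := h.floor_mem
  obtain ⟨q1, q2⟩ := q
  obtain ⟨p1, p2⟩ := p
  simp only [EdgeAdj, Prod.mk_add_mk, Prod.mk_sub_mk, Prod.mk.injEq, add_zero, sub_zero] at *
  rcases (by omega : (q1 = p1 - 1 ∧ q2 = p2) ∨ (q1 = p1 + 1 ∧ q2 = p2) ∨
    (q1 = p1 ∧ q2 = p2 - e) ∨ (q1 = p1 ∧ q2 = p2 + e)) with h | h | h | h
  all_goals first | exact h | (obtain ⟨rfl, rfl⟩ := h; contradiction)

theorem edgeAdj_stem (h : IsAttachedPocket P U p e) : EdgeAdj (p + (0, e)) p := by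
  rcases h.sign with rfl | rfl <;> simp [EdgeAdj]

theorem stem_ne_self (h : IsAttachedPocket P U p e) : p + (0, e) ≠ p := by
  rcases h.sign with rfl | rfl <;> simp

theorem ne_of_disjoint {Q V : Finset (ℤ × ℤ)} {q : ℤ × ℤ} {f : ℤ}
    (hp : IsAttachedPocket P U p e) (hq : IsAttachedPocket Q V q f) (hUV : Disjoint U V) :
    p ≠ q := by
  rintro rfl
  exact Finset.disjoint_left.mp hUV hp.right_mem hq.right_mem

theorem stem_mem (hP : IsPolyomino P) (h : IsAttachedPocket P U p e) {q : ℤ × ℤ} (hq : q ∈ P)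
    (hqp : q ≠ p) : p + (0, e) ∈ P := by
  by_contra hs
  have hclosed : ∀ a ∈ ({p} : Finset _), ∀ b ∈ P, EdgeAdj a b → b ∈ ({p} : Finset _) := by
    intro a ha b hb hab
    rw [Finset.mem_singleton] at ha
    subst ha
    exact absurd (h.eq_stem_of_edgeAdj hb hab ▸ hb) hs
  exact hqp (Finset.mem_singleton.mp (hP.subset_of_isClosed hclosed h.mem (by simp) hq))

variable {Ua Ub Uc : Finset (ℤ × ℤ)} {pa pb pc : ℤ × ℤ} {ea eb ec : ℤ}

theorem subset_pair_of_stem_eq (hP : IsPolyomino P) (ha : IsAttachedPocket P Ua pa ea)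
    (hb : IsAttachedPocket P Ub pb eb) (hs : pa + (0, ea) = pb) : P ⊆ {pa, pb} := by
  refine hP.subset_of_isClosed ?_ ha.mem (by simp)
  intro a ha' b hb' hab
  simp only [Finset.mem_insert, Finset.mem_singleton] at ha' ⊢
  rcases ha' with rfl | rfl
  · exact .inr (hs ▸ ha.eq_stem_of_edgeAdj hb' hab)
  · rw [hb.eq_stem_of_edgeAdj hb' hab, ← hb.eq_stem_of_edgeAdj ha.mem (hs ▸ ha.edgeAdj_stem)]
    exact .inl rfl

theorem stem_ne_pocket (hP : IsPolyomino P) (ha : IsAttachedPocket P Ua pa ea)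
    (hb : IsAttachedPocket P Ub pb eb) {q : ℤ × ℤ} (hq : q ∈ P) (hqa : q ≠ pa) (hqb : q ≠ pb) :
    pa + (0, ea) ≠ pb := fun hs => by
  have := subset_pair_of_stem_eq hP ha hb hs hq
  simp_all

theorem stem_ne_stem (hP : IsPolyomino P) (hcard : P.card ≤ 5)
    (ha : IsAttachedPocket P Ua pa ea) (hb : IsAttachedPocket P Ub pb eb)
    (hc : IsAttachedPocket P Uc pc ec) (hab : pa ≠ pb) (hac : pa ≠ pc) (hbc : pb ≠ pc) :
    pa + (0, ea) ≠ pb + (0, eb) := by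
  intro hs
  have hsa : pa + (0, ea) ∉ ({pa, pb, pc} : Finset (ℤ × ℤ)) := by
    simp only [Finset.mem_insert, Finset.mem_singleton, not_or]
    exact ⟨ha.stem_ne_self, ha.stem_ne_pocket hP hb hc.mem hac.symm hbc.symm,
      ha.stem_ne_pocket hP hc hb.mem hab.symm hbc⟩
  have hsc : pc + (0, ec) ∉ ({pa, pb, pc} : Finset (ℤ × ℤ)) := by
    simp only [Finset.mem_insert, Finset.mem_singleton, not_or]
    exact ⟨hc.stem_ne_pocket hP ha hb.mem hbc hab.symm, hc.stem_ne_pocket hP hb ha.mem hac hab,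
      hc.stem_ne_self⟩
  have hsaP := ha.stem_mem hP hb.mem hab.symm
  have hscP := hc.stem_mem hP ha.mem hac
  have hts : pc + (0, ec) ≠ pa + (0, ea) := fun h => by
    rcases eq_or_eq_of_shared_stem ha.sign hb.sign hc.sign hs hab h with h | h
    exacts [hac h.symm, hbc h.symm]
  have hP5 : P = {pc + (0, ec), pa + (0, ea), pa, pb, pc} := by
    refine (Finset.eq_of_subset_of_card_le ?_ ?_).symm
    · simp [Finset.insert_subset_iff, hsaP, hscP, ha.mem, hb.mem, hc.mem]
    · rw [Finset.card_insert_of_notMem (by simp_all), Finset.card_insert_of_notMem hsa,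
        Finset.card_eq_three.mpr ⟨pa, pb, pc, hab, hac, hbc, rfl⟩]
      exact hcard
  have hclosed : ∀ x ∈ ({pc, pc + (0, ec)} : Finset (ℤ × ℤ)), ∀ y ∈ P, EdgeAdj x y →
      y ∈ ({pc, pc + (0, ec)} : Finset (ℤ × ℤ)) := by
    intro x hx y hy hxy
    simp only [Finset.mem_insert, Finset.mem_singleton] at hx ⊢
    rcases hx with rfl | rfl
    · exact .inr (hc.eq_stem_of_edgeAdj hy hxy)
    rw [hP5] at hy
    simp only [Finset.mem_insert, Finset.mem_singleton] at hy
    rcases hy with rfl | rfl | rfl | rfl | rfl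
    · exact .inr rfl
    · obtain h | h | h | h := eq_side_of_edgeAdj_shared_stem ha.sign hb.sign hc.sign hs hab hxy
        (by simp_all) (by simp_all)
      · exact absurd hc.mem (Finset.disjoint_left.mp ha.disjoint (h ▸ ha.left_mem))
      · exact absurd hc.mem (Finset.disjoint_left.mp ha.disjoint (h ▸ ha.right_mem))
      · exact absurd hc.mem (Finset.disjoint_left.mp hb.disjoint (h ▸ hb.left_mem))
      · exact absurd hc.mem (Finset.disjoint_left.mp hb.disjoint (h ▸ hb.right_mem))
    · exact absurd (ha.eq_stem_of_edgeAdj hscP hxy.symm) hts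
    · exact absurd (hs ▸ hb.eq_stem_of_edgeAdj hscP hxy.symm) hts
    · exact .inl rfl
  have := hP.subset_of_isClosed hclosed hc.mem (by simp) ha.mem
  simp_all

end IsAttachedPocket

/-- At most two U-pentominoes can have their pockets touching the same polyomino of at
most five cells: if `U 1, …, U k` are pairwise disjoint translates of the upward- or
downward-opening U-pentomino, each disjoint from `P` and each with its pocket cell in `P`,
then `k ≤ 2`. -/
theorem at_most_two_attached_Us (P : Finset (ℤ × ℤ))
    (hpoly : IsPolyomino P) (hcard : P.card ≤ 5)
    (k : ℕ) (U : Fin k → Finset (ℤ × ℤ))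
    (hUdisj : Pairwise fun i j => Disjoint (U i) (U j))
    (hPdisj : ∀ j, Disjoint (U j) P)
    (hU : ∀ j, ∃ v : ℤ × ℤ,
      (U j = U0.image (fun c => c + v) ∧ ((1 : ℤ), (1 : ℤ)) + v ∈ P) ∨
      (U j = U0down.image (fun c => c + v) ∧ ((1 : ℤ), (-1 : ℤ)) + v ∈ P)) :
    k ≤ 2 := by
  by_contra! hk
  choose p e hpocket using fun j => IsAttachedPocket.exists_of_translate_U0 (hPdisj j) (hU j)
  have hp : Function.Injective p := fun i j hij => by
    by_contra hne
    exact (hpocket i).ne_of_disjoint (hpocket j) (hUdisj hne) hij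
  let s j := p j + (0, e j)
  have hsp : ∀ i j, s i ≠ p j := fun i j => by
    obtain ⟨l, hli, hlj⟩ := Fin.exists_ne_and_ne_of_two_lt i j hk
    exact (hpocket i).stem_ne_pocket hpoly (hpocket j) (hpocket l).mem (hp.ne hli) (hp.ne hlj)
  have hs : Function.Injective s := fun i j hij => by
    by_contra hne
    obtain ⟨l, hli, hlj⟩ := Fin.exists_ne_and_ne_of_two_lt i j hk
    exact (hpocket i).stem_ne_stem hpoly hcard (hpocket j) (hpocket l) (hp.ne hne) (hp.ne hli.symm)
      (hp.ne hlj.symm) hij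
  have hsP : ∀ j, s j ∈ P := fun j => by
    obtain ⟨l, hlj, -⟩ := Fin.exists_ne_and_ne_of_two_lt j j hk
    exact (hpocket j).stem_mem hpoly (hpocket l).mem (hp.ne hlj)
  have hsub : Finset.univ.image p ∪ Finset.univ.image s ⊆ P := by
    simp [Finset.union_subset_iff, Finset.image_subset_iff, hsP, fun j => (hpocket j).mem]
  have hdisj : Disjoint (Finset.univ.image p) (Finset.univ.image s) := by
    simp only [Finset.disjoint_left, Finset.mem_image, Finset.mem_univ, true_and, not_exists]
    rintro _ ⟨i, rfl⟩ j
    exact hsp j i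
  have : k + k ≤ 5 := calc
    k + k = (Finset.univ.image p ∪ Finset.univ.image s).card := by
      rw [Finset.card_union_of_disjoint hdisj, Finset.card_image_of_injective _ hp,
        Finset.card_image_of_injective _ hs, Finset.card_univ, Fintype.card_fin]
    _ ≤ P.card := Finset.card_le_card hsub
    _ ≤ 5 := hcard
  omega
end

section
/- Let 0 < h ≤ w, let n ≥ 1, and for i = 1,…,n let R_i = [0,w] × [(i−1)h, ih] ⊆ ℝ² be n congruent rectangles stacked between the fixed lines y = 0 and y = nh. Let g₁,…,gₙ be a valid motion of R₁,…,Rₙ such that moreover g_i(t)''(R_i) ⊆ {(x,y) | 0 ≤ y ≤ nh} for all i and all t. Then the pieces are pinned to horizontal sliders for positive time: there exists δ > 0 such that for all t ∈ [0,δ] and all i there is c ∈ ℝ with g_i(t)(x,y) = (x + c, y) for all (x,y) ∈ ℝ². -/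
/-!
For small `t` every `g i t` moves `R i` by less than `h / 100`, so it is a rotation by a small
angle `θᵢ` followed by a small translation. The vertical line `x = w / 2` then meets
`g i t '' R i` in a segment of length `h / cos θᵢ ≥ h` whose interior lies in the interior of
`g i t '' R i`. These `n` segments lie in `[0, n h]`, have disjoint interiors and keep their
original order, so each has length exactly `h` and is `[i h, (i + 1) h]`: every `θᵢ` vanishes
and no piece moves vertically.
-/

/-- The Euclidean plane. -/
abbrev Plane := EuclideanSpace ℝ (Fin 2)

/-- A valid motion of the sets `R i`: each `g i t` is an isometry of the plane, `g i 0 = id`,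
`(t, x) ↦ g i t x` is continuous, and at every time the interiors of the moved sets are
pairwise disjoint. -/
def IsValidMotion {n : ℕ} (R : Fin n → Set Plane)
    (g : Fin n → unitInterval → Plane → Plane) : Prop :=
  (∀ i t, Isometry (g i t)) ∧
  (∀ i, g i 0 = id) ∧
  (∀ i, Continuous fun q : unitInterval × Plane => g i q.1 q.2) ∧
  ∀ t, Pairwise fun i j => Disjoint (interior (g i t '' R i)) (interior (g j t '' R j))

open Set Filter Topology

theorem Continuous.eventually_forall_dist_lt {X Y : Type*} [TopologicalSpace X]
    [PseudoMetricSpace Y] {F : X → Y → Y} (hF : Continuous (Function.uncurry F)) {x₀ : X}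
    (hx₀ : F x₀ = id) {K : Set Y} (hK : IsCompact K) {ε : ℝ} (hε : 0 < ε) :
    ∀ᶠ x in 𝓝 x₀, ∀ p ∈ K, dist (F x p) p < ε := by
  refine hK.eventually_forall_of_forall_eventually fun p _ => ?_
  have hcont : Continuous fun z : X × Y => dist (F z.1 z.2) z.2 := hF.dist continuous_snd
  exact hcont.continuousAt.eventually_lt continuousAt_const (by simpa [hx₀] using hε)

theorem Isometry.isOpenMap_of_finiteDimensional {E : Type*} [NormedAddCommGroup E]
    [NormedSpace ℝ E] [StrictConvexSpace ℝ E] [FiniteDimensional ℝ E] {f : E → E}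
    (hf : Isometry f) : IsOpenMap f := by
  have : Inhabited E := ⟨0⟩
  exact (hf.affineIsometryOfStrictConvexSpace.toAffineIsometryEquiv rfl).toHomeomorph.isOpenMap

theorem le_of_disjoint_Ioo {α : Type*} [LinearOrder α] [DenselyOrdered α] {a b c d : α}
    (hdisj : Disjoint (Ioo a b) (Ioo c d)) (hab : a < b) (hcd : c < d) (had : a < d) : b ≤ c := by
  rw [Set.Ioo_disjoint_Ioo] at hdisj
  rcases le_total a c with hac | hca
  · rw [max_eq_right hac, min_le_iff] at hdisj
    exact hdisj.resolve_right hcd.not_ge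
  · rw [max_eq_left hca, min_le_iff] at hdisj
    exact (hdisj.elim hab.not_ge had.not_ge).elim

section StackedIntervals

variable {n : ℕ} {h : ℝ} {u v : Fin n → ℝ}

theorem mul_le_of_stacked (hlen : ∀ i, u i + h ≤ v i) (hord : ∀ i j, i < j → v i ≤ u j)
    (hlo : ∀ i, 0 ≤ u i) (i : Fin n) : (i : ℝ) * h ≤ u i := by
  obtain ⟨k, hk⟩ := i
  induction k with
  | zero => simpa using hlo _
  | succ k ih =>
    have hprev := hord ⟨k, by omega⟩ ⟨k + 1, hk⟩ (Fin.mk_lt_mk.mpr k.lt_succ_self)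
    have := hlen ⟨k, by omega⟩
    have := ih (by omega)
    push_cast
    linarith

theorem eq_of_stacked (hlen : ∀ i, u i + h ≤ v i) (hord : ∀ i j, i < j → v i ≤ u j)
    (hlo : ∀ i, 0 ≤ u i) (hhi : ∀ i, v i ≤ n * h) (i : Fin n) :
    u i = i * h ∧ v i = (i + 1) * h := by
  -- the reflection `y ↦ n h - y` turns the upper bounds into lower bounds
  have hrev := mul_le_of_stacked (u := fun j => n * h - v j.rev) (v := fun j => n * h - u j.rev)
    (fun j => by linarith [hlen j.rev])
    (fun j k hjk => by linarith [hord _ _ (Fin.rev_lt_rev.mpr hjk)])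
    (fun j => by linarith [hhi j.rev]) i.rev
  have hcast : ((i.rev : ℕ) : ℝ) = n - (i + 1) := by
    rw [Fin.val_rev, Nat.cast_sub (by omega)]; push_cast; ring
  simp only [Fin.rev_rev, hcast] at hrev
  have := mul_le_of_stacked hlen hord hlo i
  have := hlen i
  constructor <;> linarith

end StackedIntervals

def rect (w h a : ℝ) : Set Plane := {p | p 0 ∈ Icc 0 w ∧ p 1 ∈ Icc a (a + h)}

theorem isCompact_rect (w h a : ℝ) : IsCompact (rect w h a) := by
  have : rect w h a =
      EuclideanSpace.equiv (Fin 2) ℝ ⁻¹' Set.univ.pi ![Icc 0 w, Icc a (a + h)] := by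
    ext p; simp [rect, Fin.forall_fin_two]
  rw [this]
  exact (EuclideanSpace.equiv (Fin 2) ℝ).toHomeomorph.isCompact_preimage.mpr
    (isCompact_univ_pi fun i => by fin_cases i <;> exact isCompact_Icc)

theorem mem_interior_rect {w h a : ℝ} {p : Plane} (h0 : p 0 ∈ Ioo 0 w)
    (h1 : p 1 ∈ Ioo a (a + h)) : p ∈ interior (rect w h a) := by
  have hopen : IsOpen {q : Plane | q 0 ∈ Ioo 0 w ∧ q 1 ∈ Ioo a (a + h)} :=
    (isOpen_Ioo.preimage (by fun_prop)).inter (isOpen_Ioo.preimage (by fun_prop))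
  refine interior_maximal (fun q hq => ?_) hopen ⟨h0, h1⟩
  exact ⟨Ioo_subset_Icc_self hq.1, Ioo_subset_Icc_self hq.2⟩

theorem EuclideanSpace.abs_sub_apply_le_dist {ι : Type*} [Fintype ι] (p q : EuclideanSpace ℝ ι)
    (i : ι) : |p i - q i| ≤ dist p q := by
  simpa [Real.dist_eq] using PiLp.dist_apply_le p q i

def rot (c s : ℝ) (v : Plane) : Plane := !₂[c * v 0 - s * v 1, s * v 0 + c * v 1]

theorem LinearIsometry.eq_rot_of_pos (L : Plane →ₗᵢ[ℝ] Plane) {c s : ℝ}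
    (hc : L !₂[1, 0] = !₂[c, s]) (hc0 : 0 < c) (h1 : 0 < L !₂[0, 1] 1) :
    c ^ 2 + s ^ 2 = 1 ∧ ∀ v, L v = rot c s v := by
  set x := L !₂[0, 1] 0
  set y := L !₂[0, 1] 1
  have hd : L !₂[0, 1] = !₂[x, y] := by ext i; fin_cases i <;> rfl
  have hnorm : ∀ p q : ℝ, ‖(!₂[p, q] : Plane)‖ ^ 2 = p ^ 2 + q ^ 2 := fun p q => by
    simp [EuclideanSpace.real_norm_sq_eq, Fin.sum_univ_two]
  have hcs : c ^ 2 + s ^ 2 = 1 := by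
    rw [← hnorm, ← hc, L.norm_map, hnorm]; norm_num
  have hxy : x ^ 2 + y ^ 2 = 1 := by
    rw [← hnorm, ← hd, L.norm_map, hnorm]; norm_num
  have horth : c * x + s * y = 0 := by
    have := L.inner_map_map !₂[1, 0] !₂[0, 1]
    rw [hc, hd] at this
    simpa [Fin.sum_univ_two, PiLp.inner_apply, mul_comm] using this
  -- a unit vector orthogonal to `(c, s)` is `±(-s, c)`; the signs of `c` and `y` pick `+`
  have hyc : y = c := by
    have : (c - y) * (c + y) = 0 := by
      linear_combination (c * x - s * y) * horth - c ^ 2 * hxy + y ^ 2 * hcs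
    rcases mul_eq_zero.mp this with h | h <;> linarith
  have hxs : x = -s := by
    have : c * (x + s) = 0 := by rw [hyc] at horth; linear_combination horth
    linarith [(mul_eq_zero.mp this).resolve_left hc0.ne']
  refine ⟨hcs, fun v => ?_⟩
  have hv : v = v 0 • (!₂[1, 0] : Plane) + v 1 • !₂[0, 1] := by ext i; fin_cases i <;> simp
  rw [hv, map_add, map_smul, map_smul, hc, hd, hxs, hyc]
  ext i; fin_cases i <;> simp [rot] <;> ring

theorem Isometry.eq_add_rot {f : Plane → Plane} (hf : Isometry f) {z : Plane} {r ε : ℝ}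
    (hr : 0 < r) (hεr : 2 * ε < r) (hz : dist (f z) z ≤ ε)
    (hx : dist (f (z + !₂[r, 0])) (z + !₂[r, 0]) ≤ ε)
    (hy : dist (f (z + !₂[0, r])) (z + !₂[0, r]) ≤ ε) :
    ∃ c s, c ^ 2 + s ^ 2 = 1 ∧ |c - 1| ≤ 2 * ε / r ∧ |s| ≤ 2 * ε / r ∧
      ∀ p, f p = f z + rot c s (p - z) := by
  set L := hf.affineIsometryOfStrictConvexSpace.linearIsometry
  have hL : ∀ p, L (p - z) = f p - f z := fun p =>
    hf.affineIsometryOfStrictConvexSpace.map_vsub p z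
  have hclose : ∀ e : Plane, dist (f (z + r • e)) (z + r • e) ≤ ε →
      dist (L e) e ≤ 2 * ε / r := by
    intro e he
    have hdiff : r • (L e - e) = (f (z + r • e) - (z + r • e)) - (f z - z) := by
      have hLe := hL (z + r • e)
      rw [add_sub_cancel_left] at hLe
      rw [smul_sub, ← map_smul, hLe]; abel
    have : r * dist (L e) e ≤ 2 * ε := calc
      r * dist (L e) e = ‖r • (L e - e)‖ := by
        rw [norm_smul, Real.norm_of_nonneg hr.le, dist_eq_norm]
      _ ≤ dist (f (z + r • e)) (z + r • e) + dist (f z) z := by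
        rw [hdiff, dist_eq_norm, dist_eq_norm]; exact norm_sub_le _ _
      _ ≤ 2 * ε := by linarith
    rwa [le_div_iff₀ hr, mul_comm]
  have he0 := hclose !₂[1, 0] (by convert hx using 3 <;> ext i <;> fin_cases i <;> simp)
  have he1 := hclose !₂[0, 1] (by convert hy using 3 <;> ext i <;> fin_cases i <;> simp)
  have hc := EuclideanSpace.abs_sub_apply_le_dist _ _ 0 |>.trans he0
  have hs := EuclideanSpace.abs_sub_apply_le_dist _ _ 1 |>.trans he0
  have hy1 := EuclideanSpace.abs_sub_apply_le_dist _ _ 1 |>.trans he1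
  simp only [Matrix.cons_val_zero, Matrix.cons_val_one, sub_zero] at hc hs hy1
  have hsmall : 2 * ε / r < 1 := (div_lt_one hr).mpr hεr
  obtain ⟨hcs, hrot⟩ := L.eq_rot_of_pos (c := L !₂[1, 0] 0) (s := L !₂[1, 0] 1)
    (by ext i; fin_cases i <;> rfl) (by linarith [(abs_le.mp hc).1])
    (by linarith [(abs_le.mp hy1).1])
  refine ⟨_, _, hcs, hc, hs, fun p => ?_⟩
  rw [← hrot, hL, add_sub_cancel]

section VerticalSlice

variable {w h a c s b0 b1 : ℝ} {f : Plane → Plane}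

theorem abs_horizontal_offset_lt (hh : 0 < h) (hhw : h ≤ w) (hc : 24 / 25 ≤ c) (hc1 : c ≤ 1)
    (hs : |s| ≤ 1 / 25) (hb0 : |b0| ≤ h / 100) {X : ℝ} (hX0 : 0 ≤ X) (hXh : X ≤ h) :
    |s * (X - h / 2 - s * b0) - c ^ 2 * b0| < c * (w / 2) := by
  have hsb : |s * b0| ≤ h / 2500 := by
    rw [abs_mul]; nlinarith [abs_nonneg s, abs_nonneg b0]
  have hT : |X - h / 2 - s * b0| ≤ h / 2 + h / 2500 := by
    rw [abs_le] at hsb ⊢; constructor <;> linarith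
  have hsT : |s * (X - h / 2 - s * b0)| ≤ h / 40 := by
    rw [abs_mul]; nlinarith [abs_nonneg s, abs_nonneg (X - h / 2 - s * b0)]
  have hcb : |c ^ 2 * b0| ≤ h / 100 := by
    rw [abs_mul, abs_of_nonneg (sq_nonneg c)]
    nlinarith [mul_le_mul_of_nonneg_right (show c ^ 2 ≤ 1 by nlinarith) (abs_nonneg b0)]
  calc |s * (X - h / 2 - s * b0) - c ^ 2 * b0|
      ≤ |s * (X - h / 2 - s * b0)| + |c ^ 2 * b0| := abs_sub _ _
    _ < c * (w / 2) := by nlinarith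

theorem exists_preimage_on_vertical_line (hh : 0 < h) (hhw : h ≤ w) (hcs : c ^ 2 + s ^ 2 = 1)
    (hc : 24 / 25 ≤ c) (hs : |s| ≤ 1 / 25) (hb0 : |b0| ≤ h / 100)
    (hf : ∀ p, f p = !₂[w / 2 + b0, a + h / 2 + b1] + rot c s (p - !₂[w / 2, a + h / 2]))
    {u y : ℝ} (hu : c * (u - a) = c * (h / 2 + b1) - h / 2 - s * b0)
    (hy0 : 0 ≤ c * (y - u)) (hyh : c * (y - u) ≤ h) :
    ∃ q : Plane, f q = !₂[w / 2, y] ∧ q 0 ∈ Ioo 0 w ∧ q 1 = a + c * (y - u) := by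
  set T := y - (a + h / 2) - b1
  refine ⟨!₂[w / 2 - c * b0 + s * T, a + h / 2 + s * b0 + c * T], ?_, ?_, ?_⟩
  · rw [hf]; ext i; fin_cases i
    · simp [rot]; linear_combination (-b0) * hcs
    · simp [rot]; linear_combination T * hcs
  · have hc0 : 0 < c := by linarith
    have hdev : c * (s * T - c * b0) = s * (c * (y - u) - h / 2 - s * b0) - c ^ 2 * b0 := by
      linear_combination s * hu
    have := abs_horizontal_offset_lt hh hhw hc (by nlinarith) hs hb0 hy0 hyh
    rw [← hdev, abs_mul, abs_of_pos hc0] at this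
    have := abs_lt.mp (lt_of_mul_lt_mul_left this hc0.le)
    simp only [Matrix.cons_val_zero]
    constructor <;> linarith
  · simp only [Matrix.cons_val_one, Matrix.cons_val_zero]
    linear_combination hu

theorem exists_vertical_slice_of_eq_rot (hh : 0 < h) (hhw : h ≤ w) (hfo : IsOpenMap f)
    (hcs : c ^ 2 + s ^ 2 = 1) (hc : 24 / 25 ≤ c) (hs : |s| ≤ 1 / 25) (hb0 : |b0| ≤ h / 100)
    (hb1 : |b1| ≤ h / 100)
    (hf : ∀ p, f p = !₂[w / 2 + b0, a + h / 2 + b1] + rot c s (p - !₂[w / 2, a + h / 2])) :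
    ∃ u v, u + h ≤ v ∧ u < a + h ∧ a < v ∧
      (∀ y ∈ Icc u v, !₂[w / 2, y] ∈ f '' rect w h a) ∧
      Ioo u v ⊆ (fun y => !₂[w / 2, y]) ⁻¹' interior (f '' rect w h a) ∧
      (u = a → v = a + h → ∃ d, ∀ p, f p 0 = p 0 + d ∧ f p 1 = p 1) := by
  have hc0 : 0 < c := by linarith
  have hc1 : c ≤ 1 := by nlinarith
  have hsb : |s * b0| ≤ h / 2500 := by
    rw [abs_mul]; nlinarith [abs_nonneg s, abs_nonneg b0]
  -- the vertical line `x = w / 2` meets `f '' rect w h a` in `[u, u + h / c]`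
  set u := a + h / 2 + b1 - (h / 2 + s * b0) / c with hu_def
  have hu : c * (u - a) = c * (h / 2 + b1) - h / 2 - s * b0 := by
    rw [hu_def]; field_simp; ring
  refine ⟨u, u + h / c, ?_, ?_, ?_, ?_, ?_, ?_⟩
  · have : h ≤ h / c := by rw [le_div_iff₀ hc0]; nlinarith
    linarith
  · nlinarith [abs_le.mp hb1, abs_le.mp hsb]
  · have : c * (u + h / c - a) = c * (h / 2 + b1) + h / 2 - s * b0 := by
      rw [mul_sub, mul_add, mul_div_cancel₀ _ hc0.ne']; linear_combination hu
    nlinarith [abs_le.mp hb1, abs_le.mp hsb]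
  · rintro y ⟨hy0, hy1⟩
    have hX : c * (y - u) ≤ h := by rw [← le_div_iff₀' hc0]; linarith
    have hX0 : 0 ≤ c * (y - u) := mul_nonneg hc0.le (by linarith)
    obtain ⟨q, hfq, hq0, hq1⟩ :=
      exists_preimage_on_vertical_line hh hhw hcs hc hs hb0 hf hu hX0 hX
    refine ⟨q, ⟨Ioo_subset_Icc_self hq0, ?_⟩, hfq⟩
    rw [hq1]; constructor <;> linarith
  · rintro y ⟨hy0, hy1⟩
    have hX : c * (y - u) < h := by rw [← lt_div_iff₀' hc0]; linarith
    have hX0 : 0 < c * (y - u) := mul_pos hc0 (by linarith)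
    obtain ⟨q, hfq, hq0, hq1⟩ :=
      exists_preimage_on_vertical_line hh hhw hcs hc hs hb0 hf hu hX0.le hX.le
    show !₂[w / 2, y] ∈ interior (f '' rect w h a)
    rw [← hfq]
    refine hfo.image_interior_subset _ ⟨q, mem_interior_rect hq0 ?_, rfl⟩
    rw [hq1]; constructor <;> linarith
  · intro hua hva
    have hc_one : c = 1 := by
      have : h / c = h := by linarith
      rwa [div_eq_iff hc0.ne', left_eq_mul₀ hh.ne'] at this
    have hs0 : s = 0 := by nlinarith
    have hb10 : b1 = 0 := by rw [hc_one, hs0] at hu_def; linarith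
    refine ⟨b0, fun p => ⟨?_, ?_⟩⟩
    · simp [hf, hc_one, hs0, rot]; ring
    · simp [hf, hc_one, hs0, hb10, rot]

end VerticalSlice

theorem exists_vertical_slice {w h a : ℝ} (hh : 0 < h) (hhw : h ≤ w) {f : Plane → Plane}
    (hf : Isometry f) (hmove : ∀ p ∈ rect w h a, dist (f p) p ≤ h / 100) :
    ∃ u v, u + h ≤ v ∧ u < a + h ∧ a < v ∧
      (∀ y ∈ Icc u v, !₂[w / 2, y] ∈ f '' rect w h a) ∧
      Ioo u v ⊆ (fun y => !₂[w / 2, y]) ⁻¹' interior (f '' rect w h a) ∧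
      (u = a → v = a + h → ∃ d, ∀ p, f p 0 = p 0 + d ∧ f p 1 = p 1) := by
  set z : Plane := !₂[w / 2, a + h / 2]
  have hadd : ∀ x y x' y' : ℝ, (!₂[x, y] : Plane) + !₂[x', y'] = !₂[x + x', y + y'] := by
    intros; ext i; fin_cases i <;> simp
  have hmove' : ∀ x ∈ Icc 0 w, ∀ y ∈ Icc a (a + h),
      dist (f !₂[x, y]) !₂[x, y] ≤ h / 100 :=
    fun x hx y hy => hmove _ ⟨by simpa using hx, by simpa using hy⟩
  have hz : dist (f z) z ≤ h / 100 :=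
    hmove' (w / 2) ⟨by linarith, by linarith⟩ (a + h / 2) ⟨by linarith, by linarith⟩
  obtain ⟨c, s, hcs, hc, hs, hrot⟩ := hf.eq_add_rot (z := z) (r := h / 2) (ε := h / 100)
    (by positivity) (by linarith) hz
    (by rw [hadd]; exact hmove' _ ⟨by linarith, by linarith⟩ _ ⟨by linarith, by linarith⟩)
    (by rw [hadd]; exact hmove' _ ⟨by linarith, by linarith⟩ _ ⟨by linarith, by linarith⟩)
  have hratio : 2 * (h / 100) / (h / 2) = 1 / 25 := by field_simp; norm_num
  rw [hratio] at hc hs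
  have hfz : f z = !₂[w / 2 + (f z 0 - w / 2), a + h / 2 + (f z 1 - (a + h / 2))] := by
    ext i; fin_cases i <;> simp
  refine exists_vertical_slice_of_eq_rot hh hhw hf.isOpenMap_of_finiteDimensional hcs
    (by linarith [(abs_le.mp hc).1]) hs ?_ ?_ fun p => by rw [hrot, ← hfz]
  · simpa [z] using (EuclideanSpace.abs_sub_apply_le_dist (f z) z 0).trans hz
  · simpa [z] using (EuclideanSpace.abs_sub_apply_le_dist (f z) z 1).trans hz

theorem stacked_rectangles_pinned_to_horizontal_sliders_general (w h : ℝ) (hh : 0 < h) (hhw : h ≤ w)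
    (n : ℕ)
    (R : Fin n → Set Plane)
    (hR : ∀ i : Fin n, R i =
      {p : Plane | p 0 ∈ Set.Icc 0 w ∧ p 1 ∈ Set.Icc ((i : ℝ) * h) (((i : ℝ) + 1) * h)})
    (g : Fin n → unitInterval → Plane → Plane)
    (hvalid : IsValidMotion R g)
    (hsub : ∀ i t, g i t '' R i ⊆ {p : Plane | p 1 ∈ Set.Icc 0 ((n : ℝ) * h)}) :
    ∃ δ : ℝ, 0 < δ ∧ ∀ t : unitInterval, (t : ℝ) ≤ δ →
      ∀ i, ∃ c : ℝ, ∀ p : Plane, g i t p 0 = p 0 + c ∧ g i t p 1 = p 1 := by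
  obtain ⟨hiso, hid, hcont, hdisj⟩ := hvalid
  obtain rfl : R = fun i : Fin n => rect w h ((i : ℝ) * h) :=
    funext fun i => by rw [hR, rect, add_one_mul]
  have hsmall : ∀ᶠ t in 𝓝 0, ∀ i : Fin n, ∀ p ∈ rect w h ((i : ℝ) * h),
      dist (g i t p) p < h / 100 :=
    eventually_all.mpr fun i =>
      (hcont i).eventually_forall_dist_lt (hid i) (isCompact_rect _ _ _) (by positivity)
  obtain ⟨δ, hδ, hδsmall⟩ := Metric.eventually_nhds_iff.mp hsmall
  refine ⟨δ / 2, half_pos hδ, fun t ht => ?_⟩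
  have ht := hδsmall (y := t) (by
    rw [Subtype.dist_eq, Set.Icc.coe_zero, dist_zero_right, Real.norm_of_nonneg t.2.1]; linarith)
  choose u v hlen hlt hgt hmem hint hrigid using fun i =>
    exists_vertical_slice hh hhw (hiso i t) fun p hp => (ht i p hp).le
  have hstrip : ∀ i, u i ∈ Icc 0 (n * h) ∧ v i ∈ Icc 0 (n * h) := fun i =>
    ⟨by simpa using hsub i t (hmem i _ (left_mem_Icc.mpr (by linarith [hlen i]))),
     by simpa using hsub i t (hmem i _ (right_mem_Icc.mpr (by linarith [hlen i])))⟩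
  have hord : ∀ i j, i < j → v i ≤ u j := fun i j hij => by
    have hij' : ((i : ℝ) + 1) * h ≤ j * h :=
      mul_le_mul_of_nonneg_right (by exact_mod_cast hij) hh.le
    refine le_of_disjoint_Ioo (((hdisj t hij.ne).preimage _).mono (hint i) (hint j))
      (by linarith [hlen i]) (by linarith [hlen j]) ?_
    linarith [hlt i, hgt j]
  intro i
  obtain ⟨hui, hvi⟩ :=
    eq_of_stacked hlen hord (fun i => (hstrip i).1.1) (fun i => (hstrip i).2.2) i
  exact hrigid i hui (by rw [hvi]; ring)

/-- `n` congruent rectangles `[0, w] × [(i-1)h, ih]` (with `0 < h ≤ w`) stacked between the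
fixed lines `y = 0` and `y = nh`: in any valid motion that keeps them inside the strip
`0 ≤ y ≤ nh`, the pieces are pinned to horizontal sliders for positive time. -/
theorem stacked_rectangles_pinned_to_horizontal_sliders (w h : ℝ) (hh : 0 < h) (hhw : h ≤ w)
    (n : ℕ) (hn : 1 ≤ n)
    (R : Fin n → Set Plane)
    (hR : ∀ i : Fin n, R i =
      {p : Plane | p 0 ∈ Set.Icc 0 w ∧ p 1 ∈ Set.Icc ((i : ℝ) * h) (((i : ℝ) + 1) * h)})
    (g : Fin n → unitInterval → Plane → Plane)
    (hvalid : IsValidMotion R g)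
    (hsub : ∀ i t, g i t '' R i ⊆ {p : Plane | p 1 ∈ Set.Icc 0 ((n : ℝ) * h)}) :
    ∃ δ : ℝ, 0 < δ ∧ ∀ t : unitInterval, (t : ℝ) ≤ δ →
      ∀ i, ∃ c : ℝ, ∀ p : Plane, g i t p 0 = p 0 + c ∧ g i t p 1 = p 1 :=
  stacked_rectangles_pinned_to_horizontal_sliders_general w h hh hhw n R hR g hvalid hsub
end
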